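/- Let n, m be nonzero integers. Then the cohomology of the cochain complex C(n) ⊗_R D(m), computed in the category of abelian groups, satisfies: H⁰ ≅ ℤ, H¹ ≅ ℤ² ⊕ ℤ/|nm|ℤ, H² ≅ ℤ ⊕ ℤ/|nm|ℤ, and Hⁱ = 0 for all other i. In particular the cohomology contains torsion of order exactly |nm|. -/

import Mathlib

/-!
Over `ℤ`, `S = R ⊗ R` is free on `1⊗1, X⊗1, 1⊗X, X⊗X`, and multiplication by
`δₙ = nX⊗1 - 1⊗X` and by `1⊗mX` are explicit integer matrices, so the cohomology of the
three-term complex `S → S × S → S` is a computation with integer vectors. In each degree a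
linear functional on the cochains that is onto from the cocycles, and vanishes on a cocycle
exactly when it is a coboundary, identifies the cohomology group with its target. The torsion
comes from the action of the differentials on the `X⊗1, 1⊗X` coordinates: the lattice spanned
by `(n, -1)` and `(0, m)` has index `|nm|` in `ℤ²`, with quotient map `(a, b) ↦ a + nb mod nm`.
-/

open TensorProduct DualNumber CategoryTheory CategoryTheory.Limits

noncomputable section

/-- `R = ℤ[X]/(X²)`, the dual numbers over `ℤ`. -/
abbrev Rd : Type := DualNumber ℤ

/-- `S = R ⊗[ℤ] R`. -/
abbrev Sd : Type := Rd ⊗[ℤ] Rd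

/-- the element `n X ⊗ 1 - 1 ⊗ X` of `S`, the differential of `C(n)`. -/
def deltaEl (n : ℤ) : Sd := n • ((ε : Rd) ⊗ₜ[ℤ] (1 : Rd)) - (1 : Rd) ⊗ₜ[ℤ] (ε : Rd)

/-- the element `1 ⊗ mX` of `S`, i.e. the differential `1 ⊗ νₘ`. -/
def nuEl (m : ℤ) : Sd := m • ((1 : Rd) ⊗ₜ[ℤ] (ε : Rd))

/-- the three-term cochain complex concentrated in degrees 0, 1, 2 determined by
`f`, `g` with `f ≫ g = 0`. -/
noncomputable def threeTerm {A : Type} [Ring A] (M0 M1 M2 : ModuleCat A)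
    (f : M0 ⟶ M1) (g : M1 ⟶ M2) (hfg : f ≫ g = 0) :
    CochainComplex (ModuleCat A) ℤ where
  X i := if i = 0 then M0 else if i = 1 then M1 else if i = 2 then M2
    else ModuleCat.of A PUnit
  d i j :=
    if h : i = 0 ∧ j = 1 then
      (eqToHom (by simp [h.1]) : _ ⟶ M0) ≫ f ≫ (eqToHom (by simp [h.2]) : M1 ⟶ _)
    else if h' : i = 1 ∧ j = 2 then
      (eqToHom (by simp [h'.1]) : _ ⟶ M1) ≫ g ≫ (eqToHom (by simp [h'.2]) : M2 ⟶ _)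
    else 0
  shape i j hij := by
    rw [dif_neg (by rintro ⟨rfl, rfl⟩; exact hij rfl),
      dif_neg (by rintro ⟨rfl, rfl⟩; exact hij rfl)]
  d_comp_d' i j k hij hjk := by
    by_cases h01 : i = 0 ∧ j = 1
    · obtain ⟨rfl, rfl⟩ := h01
      obtain rfl : k = 2 := by have h2 : (1 : ℤ) + 1 = k := hjk; omega
      rw [dif_pos ⟨rfl, rfl⟩, dif_neg (by norm_num), dif_pos ⟨rfl, rfl⟩]
      simp only [Category.assoc, eqToHom_trans_assoc, eqToHom_refl, Category.id_comp]
      simp [reassoc_of% hfg, hfg]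
    · by_cases h12 : i = 1 ∧ j = 2
      · obtain ⟨rfl, rfl⟩ := h12
        rw [dif_neg (by norm_num : ¬((2 : ℤ) = 0 ∧ k = 1)),
          dif_neg (by rintro ⟨h, -⟩; norm_num at h : ¬((2 : ℤ) = 1 ∧ k = 2)), comp_zero]
      · rw [dif_neg h01, dif_neg h12, zero_comp]

/-- the degree-0 differential `(δₙ ⊗ 1, 1 ⊗ νₘ)` of `C(n) ⊗_R D(m)` (as a complex of
abelian groups / `ℤ`-modules). -/
def d0Z (n m : ℤ) : ModuleCat.of ℤ Sd ⟶ ModuleCat.of ℤ (Sd × Sd) :=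
  ModuleCat.ofHom (LinearMap.prod (LinearMap.mulLeft ℤ (deltaEl n)) (LinearMap.mulLeft ℤ (nuEl m)))

/-- the degree-1 differential `(-(1 ⊗ νₘ)) ⊕ (δₙ ⊗ 1)` of `C(n) ⊗_R D(m)`. -/
def d1Z (n m : ℤ) : ModuleCat.of ℤ (Sd × Sd) ⟶ ModuleCat.of ℤ Sd :=
  ModuleCat.ofHom ((LinearMap.mulLeft ℤ (deltaEl n)).comp (LinearMap.snd ℤ Sd Sd)
    - (LinearMap.mulLeft ℤ (nuEl m)).comp (LinearMap.fst ℤ Sd Sd))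

theorem dZ_comp (n m : ℤ) : d0Z n m ≫ d1Z n m = 0 := by
  have key : ∀ y : Sd, deltaEl n * (nuEl m * y) - nuEl m * (deltaEl n * y) = 0 :=
    fun y => sub_eq_zero_of_eq (mul_left_comm (deltaEl n) (nuEl m) y)
  apply ModuleCat.hom_ext; apply LinearMap.ext; intro x
  exact key x

/-- the total complex `C(n) ⊗_R D(m)` as a complex of abelian groups (`ℤ`-modules),
concentrated in degrees 0, 1, 2. -/
noncomputable def CtensDZ (n m : ℤ) : CochainComplex (ModuleCat ℤ) ℤ :=
  threeTerm (ModuleCat.of ℤ Sd) (ModuleCat.of ℤ (Sd × Sd)) (ModuleCat.of ℤ Sd)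
    (d0Z n m) (d1Z n m) (dZ_comp n m)

namespace CategoryTheory.ShortComplex

variable {R : Type*} [Ring R] {Q : Type*} [AddCommGroup Q] [Module R Q]

def moduleCatHomologyLinearEquiv (S : ShortComplex (ModuleCat R))
    (L : S.X₂ →ₗ[R] Q) (hL : ∀ q, ∃ x, S.g.hom x = 0 ∧ L x = q)
    (hker : ∀ x, S.g.hom x = 0 → (L x = 0 ↔ ∃ y, S.f.hom y = x)) :
    S.homology ≃ₗ[R] Q :=
  S.moduleCatHomologyIso.toLinearEquiv ≪≫ₗ
    Submodule.quotEquivOfEq _ _ (by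
      ext ⟨x, hx⟩
      simp only [LinearMap.mem_ker, LinearMap.coe_comp, Function.comp_apply,
        Submodule.coe_subtype, LinearMap.mem_range]
      rw [hker x hx]
      simp only [Subtype.ext_iff]
      exact Iff.rfl) ≪≫ₗ
    (L ∘ₗ (LinearMap.ker S.g.hom).subtype).quotKerEquivOfSurjective (fun q => by
      obtain ⟨x, hx, rfl⟩ := hL q
      exact ⟨⟨x, hx⟩, rfl⟩)

end CategoryTheory.ShortComplex

lemma DualNumber.fst_smul_one_add_snd_smul_eps {R : Type*} [Semiring R] (r : DualNumber R) :
    r.fst • (1 : DualNumber R) + r.snd • ε = r := by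
  ext <;> simp

lemma ZMod.intCast_natAbs_eq_zero_iff (a b : ℤ) : (a : ZMod b.natAbs) = 0 ↔ b ∣ a := by
  rw [ZMod.intCast_zmod_eq_zero_iff_dvd, Int.natAbs_dvd]

namespace CtensDZ

def toCoords : Sd →ₗ[ℤ] Fin 4 → ℤ :=
  TensorProduct.lift <| LinearMap.mk₂ ℤ
    (fun r s => ![r.fst * s.fst, r.snd * s.fst, r.fst * s.snd, r.snd * s.snd])
    (by intros; ext i; fin_cases i <;> simp [add_mul])
    (by intros; ext i; fin_cases i <;> simp [mul_assoc])
    (by intros; ext i; fin_cases i <;> simp [mul_add])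
    (by intros; ext i; fin_cases i <;> simp [mul_left_comm])

lemma toCoords_tmul (r s : Rd) :
    toCoords (r ⊗ₜ s) = ![r.fst * s.fst, r.snd * s.fst, r.fst * s.snd, r.snd * s.snd] := rfl

def ofCoords (v : Fin 4 → ℤ) : Sd :=
  v 0 • (1 ⊗ₜ 1) + v 1 • (ε ⊗ₜ 1) + v 2 • (1 ⊗ₜ ε) + v 3 • (ε ⊗ₜ ε)

lemma ofCoords_toCoords (x : Sd) : ofCoords (toCoords x) = x := by
  induction x using TensorProduct.induction_on with
  | zero => simp [ofCoords]
  | tmul r s =>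
    conv_rhs => rw [← r.fst_smul_one_add_snd_smul_eps, ← s.fst_smul_one_add_snd_smul_eps]
    simp only [ofCoords, toCoords_tmul, add_tmul, tmul_add, ← smul_tmul', tmul_smul,
      Matrix.cons_val]
    module
  | add x y hx hy =>
    conv_rhs => rw [← hx, ← hy]
    simp only [ofCoords, map_add, Pi.add_apply, add_smul]
    abel

lemma toCoords_ofCoords (v : Fin 4 → ℤ) : toCoords (ofCoords v) = v := by
  simp only [ofCoords, map_add, map_zsmul, toCoords_tmul]
  ext i; fin_cases i <;> simp

def coords : Sd ≃ₗ[ℤ] Fin 4 → ℤ :=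
  { toCoords with
    invFun := ofCoords
    left_inv := ofCoords_toCoords
    right_inv := toCoords_ofCoords }

lemma coords_symm_apply (v : Fin 4 → ℤ) :
    coords.symm v = v 0 • (1 ⊗ₜ 1) + v 1 • (ε ⊗ₜ 1) + v 2 • (1 ⊗ₜ ε) + v 3 • (ε ⊗ₜ ε) :=
  rfl

lemma coords_deltaEl_mul (n : ℤ) (x : Sd) :
    coords (deltaEl n * x) = ![0, n * coords x 0, -coords x 0, n * coords x 2 - coords x 1] := by
  rw [← coords.apply_symm_apply ![_, _, _, _]]
  congr 1
  conv_lhs => rw [← coords.symm_apply_apply x]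
  simp only [coords_symm_apply, deltaEl, mul_add, sub_mul, smul_mul_assoc, mul_smul_comm,
    Algebra.TensorProduct.tmul_mul_tmul, eps_mul_eps, one_mul, mul_one, zero_tmul, tmul_zero,
    Matrix.cons_val]
  module

lemma coords_nuEl_mul (m : ℤ) (x : Sd) :
    coords (nuEl m * x) = ![0, 0, m * coords x 0, m * coords x 1] := by
  rw [← coords.apply_symm_apply ![_, _, _, _]]
  congr 1
  conv_lhs => rw [← coords.symm_apply_apply x]
  simp only [coords_symm_apply, nuEl, mul_add, smul_mul_assoc, mul_smul_comm,
    Algebra.TensorProduct.tmul_mul_tmul, eps_mul_eps, one_mul, mul_one, tmul_zero,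
    Matrix.cons_val]
  module

def classMap₀ : Sd →ₗ[ℤ] ℤ :=
  (LinearMap.proj 3 : (Fin 4 → ℤ) →ₗ[ℤ] ℤ) ∘ₗ coords.toLinearMap

lemma classMap₀_surjective_on_cycles (n m k : ℤ) :
    ∃ x : Sd, (deltaEl n * x, nuEl m * x) = 0 ∧ classMap₀ x = k := by
  refine ⟨coords.symm ![0, 0, 0, k], ?_, by simp [classMap₀]⟩
  simp only [Prod.mk_eq_zero, ← coords.map_eq_zero_iff, coords_deltaEl_mul, coords_nuEl_mul]
  simp

lemma classMap₀_eq_zero_iff {n m : ℤ} (hn : n ≠ 0) (hm : m ≠ 0) (x : Sd)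
    (hx : (deltaEl n * x, nuEl m * x) = 0) : classMap₀ x = 0 ↔ x = 0 := by
  refine ⟨fun h3 => coords.injective ?_, fun h => by simp [h]⟩
  replace h3 : coords x 3 = 0 := h3
  have hδ := congrArg coords (congrArg Prod.fst hx)
  have hν := congrArg coords (congrArg Prod.snd hx)
  have h0 : coords x 0 = 0 := by simpa [coords_deltaEl_mul] using congrFun hδ 2
  have h1 : coords x 1 = 0 := by simpa [coords_nuEl_mul, hm] using congrFun hν 3
  have h2 : coords x 2 = 0 := by simpa [coords_deltaEl_mul, h1, hn] using congrFun hδ 3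
  ext i; fin_cases i <;> simp [h0, h1, h2, h3]

def classMap₁ (n m : ℤ) : Sd × Sd →ₗ[ℤ] (Fin 2 → ℤ) × ZMod (n * m).natAbs where
  toFun p := (![coords p.1 1 + n * coords p.1 2, coords p.2 2 + m * coords p.1 2],
    ((coords p.2 3 + m * coords p.1 3 : ℤ) : ZMod (n * m).natAbs))
  map_add' p q := by
    ext i
    · fin_cases i <;> simp [mul_add, add_add_add_comm]
    · simp [mul_add, add_add_add_comm]
  map_smul' c p := by
    simp only [Prod.smul_fst, Prod.smul_snd, map_zsmul]
    ext i
    · fin_cases i <;> simp [mul_add, mul_left_comm]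
    · simp [mul_add, mul_left_comm]

lemma classMap₁_surjective_on_cycles (n m : ℤ) (q : (Fin 2 → ℤ) × ZMod (n * m).natAbs) :
    ∃ p : Sd × Sd, deltaEl n * p.2 - nuEl m * p.1 = 0 ∧ classMap₁ n m p = q := by
  obtain ⟨u, c⟩ := q
  obtain ⟨k, rfl⟩ := ZMod.intCast_surjective c
  refine ⟨(coords.symm ![0, u 0, 0, 0], coords.symm ![0, n * u 1 - m * u 0, u 1, k]), ?_, ?_⟩
  · apply coords.injective
    ext i; fin_cases i <;> simp [coords_deltaEl_mul, coords_nuEl_mul]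
  · ext i
    · fin_cases i <;> simp [classMap₁]
    · simp [classMap₁]

lemma classMap₁_eq_zero_iff {n m : ℤ} (hn : n ≠ 0) (hm : m ≠ 0) (p : Sd × Sd)
    (hp : deltaEl n * p.2 - nuEl m * p.1 = 0) :
    classMap₁ n m p = 0 ↔ ∃ s, (deltaEl n * s, nuEl m * s) = p := by
  simp only [classMap₁, LinearMap.coe_mk, AddHom.coe_mk, Prod.mk_eq_zero, Matrix.cons_eq_zero_iff,
    ZMod.intCast_natAbs_eq_zero_iff, eq_iff_true_of_subsingleton, and_true]
  constructor
  · rintro ⟨⟨h1, h2⟩, k, hk⟩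
    have hcyc := congrArg coords hp
    have hz0 : coords p.2 0 = 0 := by
      simpa [coords_deltaEl_mul, coords_nuEl_mul, hn] using congrFun hcyc 1
    have hw0 : coords p.1 0 = 0 := by
      simpa [coords_deltaEl_mul, coords_nuEl_mul, hz0, hm] using congrFun hcyc 2
    have hz1 : n * coords p.2 2 - coords p.2 1 - m * coords p.1 1 = 0 := by
      simpa [coords_deltaEl_mul, coords_nuEl_mul] using congrFun hcyc 3
    refine ⟨coords.symm ![-coords p.1 2, n * k - coords p.1 3, k, 0], Prod.ext ?_ ?_⟩ <;>
      apply coords.injective <;> ext i <;> fin_cases i <;>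
      simp [coords_deltaEl_mul, coords_nuEl_mul, hw0, hz0]
    · linear_combination -h1
    · linear_combination hz1 - n * h2 + m * h1
    · linear_combination -h2
    · linear_combination -hk
  · rintro ⟨s, rfl⟩
    simp [coords_deltaEl_mul, coords_nuEl_mul]
    exact ⟨coords s 2, by ring⟩

def classMap₂ (n m : ℤ) : Sd →ₗ[ℤ] ℤ × ZMod (n * m).natAbs where
  toFun x := (coords x 0, ((coords x 1 + n * coords x 2 : ℤ) : ZMod (n * m).natAbs))
  map_add' x y := by ext <;> simp [mul_add, add_add_add_comm]
  map_smul' c x := by simp only [map_zsmul]; ext <;> simp [mul_left_comm]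

lemma classMap₂_surjective (n m : ℤ) : Function.Surjective (classMap₂ n m) := by
  rintro ⟨a, c⟩
  obtain ⟨k, rfl⟩ := ZMod.intCast_surjective c
  exact ⟨coords.symm ![a, k, 0, 0], by simp [classMap₂]⟩

lemma classMap₂_eq_zero_iff (n m : ℤ) (x : Sd) :
    classMap₂ n m x = 0 ↔ ∃ p : Sd × Sd, deltaEl n * p.2 - nuEl m * p.1 = x := by
  simp only [classMap₂, LinearMap.coe_mk, AddHom.coe_mk, Prod.mk_eq_zero,
    ZMod.intCast_natAbs_eq_zero_iff]
  constructor
  · rintro ⟨h0, k, hk⟩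
    refine ⟨(coords.symm ![-k, 0, 0, 0], coords.symm ![m * k - coords x 2, -coords x 3, 0, 0]), ?_⟩
    apply coords.injective
    ext i; fin_cases i <;> simp [coords_deltaEl_mul, coords_nuEl_mul]
    · exact h0.symm
    · linear_combination -hk
  · rintro ⟨p, rfl⟩
    simp only [map_sub, Pi.sub_apply, coords_deltaEl_mul, coords_nuEl_mul, Matrix.cons_val]
    exact ⟨by ring, -coords p.1 0, by ring⟩

variable {n m : ℤ}

open ShortComplex

def homologyZeroEquiv (hn : n ≠ 0) (hm : m ≠ 0) : (CtensDZ n m).homology 0 ≃ₗ[ℤ] ℤ :=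
  ((CtensDZ n m).homologyIsoSc' (-1) 0 1 (by simp) (by simp)).toLinearEquiv ≪≫ₗ
    moduleCatHomologyLinearEquiv _ classMap₀ (classMap₀_surjective_on_cycles n m)
      -- the incoming differential starts at the zero module `X (-1)`
      (fun x hx => (classMap₀_eq_zero_iff hn hm x hx).trans
        ⟨fun h => ⟨0, h ▸ rfl⟩, fun ⟨_, h⟩ => h ▸ rfl⟩)

def homologyOneEquiv (hn : n ≠ 0) (hm : m ≠ 0) :
    (CtensDZ n m).homology 1 ≃ₗ[ℤ] (Fin 2 → ℤ) × ZMod (n * m).natAbs :=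
  ((CtensDZ n m).homologyIsoSc' 0 1 2 (by simp) (by simp)).toLinearEquiv ≪≫ₗ
    moduleCatHomologyLinearEquiv _ (classMap₁ n m) (classMap₁_surjective_on_cycles n m)
      (classMap₁_eq_zero_iff hn hm)

def homologyTwoEquiv : (CtensDZ n m).homology 2 ≃ₗ[ℤ] ℤ × ZMod (n * m).natAbs :=
  ((CtensDZ n m).homologyIsoSc' 1 2 3 (by simp) (by simp)).toLinearEquiv ≪≫ₗ
    moduleCatHomologyLinearEquiv _ (classMap₂ n m)
      (fun q => (classMap₂_surjective n m q).imp fun _ h => ⟨rfl, h⟩)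
      (fun x _ => classMap₂_eq_zero_iff n m x)

lemma subsingleton_homology {i : ℤ} (h0 : i ≠ 0) (h1 : i ≠ 1) (h2 : i ≠ 2) :
    Subsingleton ((CtensDZ n m).homology i) := by
  refine ModuleCat.subsingleton_of_isZero (ShortComplex.isZero_homology_of_isZero_X₂ _ ?_)
  change IsZero (if i = 0 then _ else if i = 1 then _ else if i = 2 then _ else _)
  rw [if_neg h0, if_neg h1, if_neg h2]
  exact ModuleCat.isZero_of_subsingleton _

end CtensDZ

open CtensDZ in
/-- `H⁰(C(n) ⊗_R D(m)) ≅ ℤ`, `H¹ ≅ ℤ² ⊕ ℤ/|nm|ℤ`, `H² ≅ ℤ ⊕ ℤ/|nm|ℤ`, and all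
other cohomology groups vanish; in particular the cohomology has torsion of order
exactly `|nm|`. -/
theorem cohomology_CtensD (n m : ℤ) (hn : n ≠ 0) (hm : m ≠ 0) :
    Nonempty (((CtensDZ n m).homology 0) ≃+ ℤ) ∧
    Nonempty (((CtensDZ n m).homology 1) ≃+ ((Fin 2 → ℤ) × ZMod (n * m).natAbs)) ∧
    Nonempty (((CtensDZ n m).homology 2) ≃+ (ℤ × ZMod (n * m).natAbs)) ∧
    (∀ i : ℤ, i ≠ 0 → i ≠ 1 → i ≠ 2 → Subsingleton ((CtensDZ n m).homology i)) :=
  ⟨⟨(homologyZeroEquiv hn hm).toAddEquiv⟩, ⟨(homologyOneEquiv hn hm).toAddEquiv⟩,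
    ⟨homologyTwoEquiv.toAddEquiv⟩, fun _ => subsingleton_homology⟩

end
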